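/- arXiv:2407.02938 — 4 statements merged into one kernel-verified Lean document; each statement's English description precedes it below -/
import Mathlib

section
/- Let n = p_1 p_2 ⋯ p_k be a product of k ≥ 2 distinct primes and let I and J be two distinct nonzero proper ideals of Z_n = Z/nZ. Then the graph distance between I and J in the essential ideal graph E_{Z_n} equals 2 if and only if I + J ≠ Z_n and I ∩ J ≠ 0. -/
/-- An ideal `I` of a commutative ring `R` is essential if it is nonzero and has
nonzero intersection with every nonzero ideal of `R`. -/
def IsEssentialIdeal {R : Type*} [CommRing R] (I : Ideal R) : Prop :=
  I ≠ ⊥ ∧ ∀ J : Ideal R, J ≠ ⊥ → I ⊓ J ≠ ⊥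

/-- The essential ideal graph of a commutative ring `R`: vertices are the nonzero
proper ideals of `R`, and distinct vertices `I`, `J` are adjacent iff `I + J` is
an essential ideal of `R`. -/
def essentialIdealGraph (R : Type*) [CommRing R] :
    SimpleGraph {I : Ideal R // I ≠ ⊥ ∧ I ≠ ⊤} where
  Adj I J := I ≠ J ∧ IsEssentialIdeal (I.1 ⊔ J.1)
  symm := by
    constructor
    rintro I J ⟨hne, h⟩
    exact ⟨hne.symm, by rwa [sup_comm]⟩
  loopless := ⟨fun I h => h.1 rfl⟩

/-- The annihilating ideal graph of a commutative ring `R`: vertices are the nonzero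
annihilating ideals of `R`, with distinct vertices `I`, `J` adjacent iff `I * J = 0`. -/
def annihilatingIdealGraph (R : Type*) [CommRing R] :
    SimpleGraph {I : Ideal R // I ≠ ⊥ ∧ ∃ J : Ideal R, J ≠ ⊥ ∧ I * J = ⊥} where
  Adj I J := I ≠ J ∧ I.1 * J.1 = ⊥
  symm := by
    constructor
    rintro I J ⟨hne, h⟩
    exact ⟨hne.symm, by rwa [mul_comm]⟩
  loopless := ⟨fun I h => h.1 rfl⟩

/-- A set `W` of vertices of a graph `G` is a resolving set if any two distinct
vertices are distinguished by their distance to some element of `W`. -/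
def IsResolvingSet {V : Type*} (G : SimpleGraph V) (W : Set V) : Prop :=
  ∀ u v : V, u ≠ v → ∃ w ∈ W, G.dist u w ≠ G.dist v w

/-- The metric dimension of a graph: the least cardinality of a (finite) resolving set. -/
noncomputable def metricDim {V : Type*} (G : SimpleGraph V) : ℕ :=
  sInf {k : ℕ | ∃ W : Set V, W.Finite ∧ IsResolvingSet G W ∧ W.ncard = k}

/-- The degree of a vertex: the number of vertices adjacent to it. -/
noncomputable def gdeg {V : Type*} (G : SimpleGraph V) (v : V) : ℕ :=
  Nat.card {u : V // G.Adj v u}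

/-- The first Zagreb index: the sum of the squares of the vertex degrees. -/
noncomputable def zagreb1 {V : Type*} (G : SimpleGraph V) : ℕ :=
  ∑ᶠ v : V, (gdeg G v) ^ 2

/-- The second Zagreb index: the sum over edges `{u,v}` of `deg u * deg v`. -/
noncomputable def zagreb2 {V : Type*} (G : SimpleGraph V) : ℕ :=
  ∑ᶠ e ∈ G.edgeSet, Sym2.lift ⟨fun u v => gdeg G u * gdeg G v, fun u v => mul_comm _ _⟩ e

/-! `ℤ/nℤ` with `n` squarefree is a finite product of fields, so its ideal lattice is
complemented and the only essential ideal is `⊤`: a proper ideal misses its nonzero complement.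
Hence `I` and `J` are adjacent iff `I + J = ⊤`. A common neighbour `K` of `I` and `J` satisfies
`IJ + K = ⊤`, which rules out `I ∩ J = 0`; conversely, if `I ∩ J ≠ 0`, a complement of `I ∩ J`
is a common neighbour. -/

theorem SimpleGraph.dist_eq_two_iff {V : Type*} {G : SimpleGraph V} {u v : V} :
    G.dist u v = 2 ↔ u ≠ v ∧ ¬G.Adj u v ∧ ∃ w, G.Adj u w ∧ G.Adj v w := by
  rw [SimpleGraph.dist, ENat.toNat_eq_iff two_ne_zero, Nat.cast_ofNat,
    SimpleGraph.edist_eq_two_iff]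
  rfl

theorem Ideal.eq_top_of_sup_eq_top_of_inf_eq_bot {R : Type*} [CommRing R] {I J K : Ideal R}
    (hI : I ⊔ K = ⊤) (hJ : J ⊔ K = ⊤) (hIJ : I ⊓ J = ⊥) : K = ⊤ := by
  have hmul : I * J = ⊥ := le_bot_iff.mp (hIJ ▸ Ideal.mul_le_inf)
  have hcop : IsCoprime (I * J) K :=
    (Ideal.isCoprime_iff_sup_eq.mpr hI).mul_left (Ideal.isCoprime_iff_sup_eq.mpr hJ)
  simpa [hmul] using hcop.sup_eq

section EssentialIdealGraph

variable {R : Type*} [CommRing R] [ComplementedLattice (Ideal R)]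

theorem isEssentialIdeal_iff_eq_top [Nontrivial R] {A : Ideal R} :
    IsEssentialIdeal A ↔ A = ⊤ := by
  refine ⟨fun ⟨_, hA⟩ => ?_, fun h => h ▸ ⟨top_ne_bot, fun J hJ => by simpa⟩⟩
  obtain ⟨c, hc⟩ := exists_isCompl A
  by_contra hA_top
  have hc_ne_bot : c ≠ ⊥ := by
    rintro rfl
    exact hA_top (by simpa using hc.codisjoint.eq_top)
  exact hA c hc_ne_bot hc.disjoint.eq_bot

theorem essentialIdealGraph_adj_iff {I J : {I : Ideal R // I ≠ ⊥ ∧ I ≠ ⊤}} :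
    (essentialIdealGraph R).Adj I J ↔ I.1 ⊔ J.1 = ⊤ := by
  have : Nontrivial R := (Submodule.nontrivial_iff R).mp (nontrivial_of_ne _ _ I.2.1)
  refine ⟨fun h => isEssentialIdeal_iff_eq_top.mp h.2, fun h => ⟨?_, ?_⟩⟩
  · rintro rfl
    exact I.2.2 (by simpa using h)
  · exact isEssentialIdeal_iff_eq_top.mpr h

theorem essentialIdealGraph_exists_common_adj_iff (I J : {I : Ideal R // I ≠ ⊥ ∧ I ≠ ⊤}) :
    (∃ K, (essentialIdealGraph R).Adj I K ∧ (essentialIdealGraph R).Adj J K) ↔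
      I.1 ⊓ J.1 ≠ ⊥ := by
  simp only [essentialIdealGraph_adj_iff]
  refine ⟨fun ⟨K, hIK, hJK⟩ hIJ =>
    K.2.2 (Ideal.eq_top_of_sup_eq_top_of_inf_eq_bot hIK hJK hIJ), fun hIJ => ?_⟩
  obtain ⟨c, hc⟩ := exists_isCompl (I.1 ⊓ J.1)
  have hIc : I.1 ⊔ c = ⊤ :=
    eq_top_iff.mpr (hc.codisjoint.eq_top.ge.trans (sup_le_sup_right inf_le_left c))
  have hJc : J.1 ⊔ c = ⊤ :=
    eq_top_iff.mpr (hc.codisjoint.eq_top.ge.trans (sup_le_sup_right inf_le_right c))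
  have hc_ne_bot : c ≠ ⊥ := by
    rintro rfl
    exact I.2.2 (by simpa using hIc)
  have hc_ne_top : c ≠ ⊤ := by
    rintro rfl
    exact hIJ (by simpa using hc.disjoint.eq_bot)
  exact ⟨⟨c, hc_ne_bot, hc_ne_top⟩, hIc, hJc⟩

theorem essentialIdealGraph_dist_eq_two_iff {I J : {I : Ideal R // I ≠ ⊥ ∧ I ≠ ⊤}}
    (hIJ : I ≠ J) :
    (essentialIdealGraph R).dist I J = 2 ↔ I.1 ⊔ J.1 ≠ ⊤ ∧ I.1 ⊓ J.1 ≠ ⊥ := by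
  rw [SimpleGraph.dist_eq_two_iff, essentialIdealGraph_adj_iff,
    essentialIdealGraph_exists_common_adj_iff]
  exact and_iff_right hIJ

end EssentialIdealGraph

theorem isSemisimpleRing_zmod_prod_primes {ι : Type*} [Fintype ι] (p : ι → ℕ)
    (hp : ∀ i, (p i).Prime) (hinj : Function.Injective p) :
    IsSemisimpleRing (ZMod (∏ i, p i)) :=
  have : ∀ i, Fact (p i).Prime := fun i => ⟨hp i⟩
  (ZMod.prodEquivPi p fun i j hij =>
    (Nat.coprime_primes (hp i) (hp j)).mpr (hinj.ne hij)).symm.isSemisimpleRing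

theorem stmt_7_general (k : ℕ) (p : Fin k → ℕ)
    (hp : ∀ i, (p i).Prime) (hinj : Function.Injective p)
    (n : ℕ) (hn : n = ∏ i, p i)
    (I J : {I : Ideal (ZMod n) // I ≠ ⊥ ∧ I ≠ ⊤}) (hIJ : I ≠ J) :
    (essentialIdealGraph (ZMod n)).dist I J = 2 ↔
      (I.1 ⊔ J.1 ≠ ⊤ ∧ I.1 ⊓ J.1 ≠ ⊥) := by
  subst hn
  have := isSemisimpleRing_zmod_prod_primes p hp hinj
  exact essentialIdealGraph_dist_eq_two_iff hIJ

/-- For `n` a product of `k ≥ 2` distinct primes and distinct nonzero proper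
ideals `I`, `J` of `ℤ/nℤ`, the distance between `I` and `J` in the essential ideal graph
is `2` iff `I + J ≠ ℤ/nℤ` and `I ∩ J ≠ 0`. -/
theorem stmt_7 (k : ℕ) (hk : 2 ≤ k) (p : Fin k → ℕ)
    (hp : ∀ i, (p i).Prime) (hinj : Function.Injective p)
    (n : ℕ) (hn : n = ∏ i, p i)
    (I J : {I : Ideal (ZMod n) // I ≠ ⊥ ∧ I ≠ ⊤}) (hIJ : I ≠ J) :
    (essentialIdealGraph (ZMod n)).dist I J = 2 ↔
      (I.1 ⊔ J.1 ≠ ⊤ ∧ I.1 ⊓ J.1 ≠ ⊥) :=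
  stmt_7_general k p hp hinj n hn I J hIJ
end

section
/- Let n ≥ 4 be a composite integer and let T denote the number of nonzero proper ideals of Z_n = Z/nZ. Then the metric dimension of the essential ideal graph E_{Z_n} equals T − 1 if and only if either n = p^m for a prime p and m > 1, or n = p_1 p_2 for two distinct primes p_1 and p_2. -/
open Ideal

lemma isEssentialIdeal_top {R : Type*} [CommRing R] [Nontrivial R] :
    IsEssentialIdeal (⊤ : Ideal R) :=
  ⟨top_ne_bot, fun J hJ => by rwa [top_inf_eq]⟩

lemma essentialIdealGraph_reachable_of_isEssentialIdeal_sup {R : Type*} [CommRing R]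
    {x y : {I : Ideal R // I ≠ ⊥ ∧ I ≠ ⊤}} (h : IsEssentialIdeal (x.1 ⊔ y.1)) :
    (essentialIdealGraph R).Reachable x y := by
  by_cases hxy : x = y
  · exact hxy ▸ SimpleGraph.Reachable.refl x
  · exact SimpleGraph.Adj.reachable ⟨hxy, h⟩

section MetricDimension

variable {V : Type*} [Finite V]

lemma isResolvingSet_top_iff {W : Set V} :
    IsResolvingSet (⊤ : SimpleGraph V) W ↔ Wᶜ.ncard ≤ 1 := by
  have dist_top : ∀ {x y : V}, x ≠ y → (⊤ : SimpleGraph V).dist x y = 1 :=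
    fun h => SimpleGraph.dist_eq_one_iff_adj.2 h
  constructor
  · intro hW
    by_contra! h
    obtain ⟨u, v, hu, hv, huv⟩ := (Set.one_lt_ncard_iff (Set.toFinite _)).1 h
    obtain ⟨w, hw, hne⟩ := hW u v huv
    have huw : u ≠ w := by rintro rfl; exact hu hw
    have hvw : v ≠ w := by rintro rfl; exact hv hw
    exact hne (by rw [dist_top huw, dist_top hvw])
  · intro hW u v huv
    by_cases hu : u ∈ W
    · exact ⟨u, hu, by rw [SimpleGraph.dist_self, dist_top huv.symm]; exact zero_ne_one⟩
    · have hv : v ∈ W := by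
        by_contra hv
        exact absurd hW (not_le.2 ((Set.one_lt_ncard_iff (Set.toFinite _)).2 ⟨u, v, hu, hv, huv⟩))
      exact ⟨v, hv, by rw [SimpleGraph.dist_self, dist_top huv]; exact one_ne_zero⟩

lemma metricDim_top : metricDim (⊤ : SimpleGraph V) = Nat.card V - 1 := by
  obtain ⟨W₀, hW₀, hcard₀⟩ : ∃ W : Set V, Wᶜ.ncard ≤ 1 ∧ W.ncard = Nat.card V - 1 := by
    rcases isEmpty_or_nonempty V with hV | ⟨⟨v⟩⟩
    · exact ⟨∅, by simp, by simp⟩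
    · refine ⟨{v}ᶜ, by simp, ?_⟩
      have := Set.ncard_add_ncard_compl {v}
      rw [Set.ncard_singleton] at this
      omega
  refine le_antisymm (Nat.sInf_le ⟨W₀, Set.toFinite _, isResolvingSet_top_iff.2 hW₀, hcard₀⟩)
    (le_csInf ⟨_, W₀, Set.toFinite _, isResolvingSet_top_iff.2 hW₀, hcard₀⟩ ?_)
  rintro k ⟨W, -, hW, rfl⟩
  have := Set.ncard_add_ncard_compl W
  have := isResolvingSet_top_iff.1 hW
  omega

lemma metricDim_le_card_sub_two {G : SimpleGraph V} (hG : G.Preconnected) {u v w : V}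
    (huv : u ≠ v) (hwv : w ≠ v) (hwu : G.Adj w u) (hnwv : ¬ G.Adj w v) :
    metricDim G ≤ Nat.card V - 2 := by
  have dist_ne_zero : ∀ {x y : V}, x ≠ y → G.dist x y ≠ 0 :=
    fun hxy => mt (hG _ _).dist_eq_zero_iff.1 hxy
  refine Nat.sInf_le ⟨{u, v}ᶜ, Set.toFinite _, fun x y hxy => ?_, ?_⟩
  · by_cases hx : x ∈ ({u, v} : Set V)ᶜ
    · exact ⟨x, hx, by rw [SimpleGraph.dist_self]; exact (dist_ne_zero hxy.symm).symm⟩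
    by_cases hy : y ∈ ({u, v} : Set V)ᶜ
    · exact ⟨y, hy, by rw [SimpleGraph.dist_self]; exact dist_ne_zero hxy⟩
    have hw : w ∈ ({u, v} : Set V)ᶜ := by simp [hwu.ne, hwv]
    have hdu : G.dist u w = 1 := SimpleGraph.dist_eq_one_iff_adj.2 hwu.symm
    have hdv : G.dist v w ≠ 1 := fun h => hnwv (SimpleGraph.dist_eq_one_iff_adj.1 h).symm
    simp only [Set.mem_compl_iff, Set.mem_insert_iff, Set.mem_singleton_iff, not_not] at hx hy
    obtain ⟨rfl, rfl⟩ | ⟨rfl, rfl⟩ : x = u ∧ y = v ∨ x = v ∧ y = u := by grind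
    · exact ⟨w, hw, hdu ▸ hdv.symm⟩
    · exact ⟨w, hw, hdu ▸ hdv⟩
  · have := Set.ncard_add_ncard_compl ({u, v} : Set V)
    rw [Set.ncard_pair huv] at this
    omega

end MetricDimension

namespace Nat

lemma exists_coprime_mul_eq_of_not_isPrimePow {n : ℕ} (hn : 1 < n) (h : ¬ IsPrimePow n) :
    ∃ a b, a * b = n ∧ a.Coprime b ∧ 1 < a ∧ 1 < b := by
  have hp := minFac_prime hn.ne'
  have hn0 : n ≠ 0 := by omega
  refine ⟨_, _, ordProj_mul_ordCompl_eq_self n n.minFac,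
    (coprime_ordCompl hp hn0).pow_left _,
    one_lt_pow (hp.factorization_pos_of_dvd hn0 (minFac_dvd n)).ne' hp.one_lt, ?_⟩
  have hne : ordCompl[n.minFac] n ≠ 1 :=
    fun h1 => h ((exists_ordCompl_eq_one_iff_isPrimePow hn.ne').2 ⟨_, hp, h1⟩)
  have := ordCompl_pos n.minFac hn0
  omega

lemma exists_coprime_mul_eq_not_prime {n : ℕ} (hn : 1 < n) (hpow : ¬ IsPrimePow n)
    (hpq : ¬ ∃ p q : ℕ, p.Prime ∧ q.Prime ∧ p ≠ q ∧ n = p * q) :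
    ∃ a b, a * b = n ∧ a.Coprime b ∧ 1 < a ∧ 1 < b ∧ ¬ b.Prime := by
  obtain ⟨a, b, hab, hcop, ha, hb⟩ := exists_coprime_mul_eq_of_not_isPrimePow hn hpow
  by_cases hbp : b.Prime
  · by_cases hap : a.Prime
    · refine absurd ⟨a, b, hap, hbp, fun h => ?_, hab.symm⟩ hpq
      subst h
      exact ha.ne' ((coprime_self a).1 hcop)
    · exact ⟨b, a, by rw [mul_comm, hab], hcop.symm, hb, ha, hap⟩
  · exact ⟨a, b, hab, hcop, ha, hb, hbp⟩

end Nat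

namespace ZMod

variable {n : ℕ}

lemma exists_dvd_eq_span (I : Ideal (ZMod n)) : ∃ d, d ∣ n ∧ I = span {(d : ZMod n)} := by
  obtain ⟨g, hg⟩ := Submodule.IsPrincipal.principal (I.comap (Int.castRingHom (ZMod n)))
  rw [submodule_span_eq, ← Int.span_natAbs] at hg
  refine ⟨g.natAbs, Int.natCast_dvd_natCast.1 ?_, ?_⟩
  · rw [← mem_span_singleton, ← hg, mem_comap]
    simp
  · rw [← map_comap_of_surjective (Int.castRingHom (ZMod n)) intCast_surjective I, hg, map_span,
      Set.image_singleton]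
    simp

lemma span_natCast_ne_bot [NeZero n] {d : ℕ} (hd : d ∣ n) (hdn : d ≠ n) :
    span {(d : ZMod n)} ≠ ⊥ := by
  rw [Ne, span_singleton_eq_bot, natCast_eq_zero_iff]
  exact fun h => hdn (Nat.dvd_antisymm hd h)

lemma span_natCast_ne_top {d : ℕ} (hd : d ∣ n) (hd1 : d ≠ 1) : span {(d : ZMod n)} ≠ ⊤ := by
  rw [Ne, span_singleton_eq_top, isUnit_iff_coprime]
  exact fun h => hd1 (h.eq_one_of_dvd hd)

lemma span_natCast_sup_span_natCast_eq_top {a b : ℕ} (h : a.Coprime b) :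
    span {(a : ZMod n)} ⊔ span {(b : ZMod n)} = ⊤ := by
  rw [← isCoprime_iff_sup_eq, isCoprime_span_singleton_iff]
  simpa using h.isCoprime.map (Int.castRingHom (ZMod n))

lemma natCast_div_mem_span_natCast {d q : ℕ} (h : q * d ∣ n) :
    ((n / q : ℕ) : ZMod n) ∈ span {(d : ZMod n)} :=
  mem_span_singleton.2 (Nat.cast_dvd_cast (Nat.dvd_div_of_mul_dvd h))

lemma natCast_div_ne_zero [NeZero n] {p : ℕ} (hp : p.Prime) (hpn : p ∣ n) :
    ((n / p : ℕ) : ZMod n) ≠ 0 := by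
  rw [Ne, natCast_eq_zero_iff]
  exact Nat.not_dvd_of_pos_of_lt (Nat.div_pos (Nat.le_of_dvd (NeZero.pos n) hpn) hp.pos)
    (Nat.div_lt_self (NeZero.pos n) hp.one_lt)

lemma exists_prime_natCast_div_mem {I : Ideal (ZMod n)} (hI : I ≠ ⊥) :
    ∃ p, p.Prime ∧ p ∣ n ∧ ((n / p : ℕ) : ZMod n) ∈ I := by
  obtain ⟨d, hdn, rfl⟩ := exists_dvd_eq_span I
  have hnd : n / d ≠ 1 := fun h => hI (by
    rw [span_singleton_eq_bot, natCast_eq_zero_iff, Nat.eq_of_dvd_of_div_eq_one hdn h])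
  obtain ⟨p, hp, hpd⟩ := Nat.exists_prime_and_dvd hnd
  refine ⟨p, hp, hpd.trans (Nat.div_dvd_of_dvd hdn), natCast_div_mem_span_natCast ?_⟩
  simpa [Nat.div_mul_cancel hdn] using mul_dvd_mul_right hpd d

lemma isEssentialIdeal_of_forall_natCast_div_mem (hn : 1 < n) {I : Ideal (ZMod n)}
    (h : ∀ p, p.Prime → p ∣ n → ((n / p : ℕ) : ZMod n) ∈ I) : IsEssentialIdeal I := by
  have : NeZero n := ⟨by omega⟩
  have ne_bot_of_mem : ∀ {J : Ideal (ZMod n)} {p : ℕ}, p.Prime → p ∣ n →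
      ((n / p : ℕ) : ZMod n) ∈ J → J ≠ ⊥ :=
    fun hp hpn hJ hbot => natCast_div_ne_zero hp hpn ((Submodule.mem_bot _).1 (hbot ▸ hJ))
  have hp := Nat.minFac_prime hn.ne'
  refine ⟨ne_bot_of_mem hp n.minFac_dvd (h _ hp n.minFac_dvd), fun J hJ => ?_⟩
  obtain ⟨p, hp, hpn, hpJ⟩ := exists_prime_natCast_div_mem hJ
  exact ne_bot_of_mem hp hpn (mem_inf.2 ⟨h p hp hpn, hpJ⟩)

lemma isEssentialIdeal_sup_span_prime (hn : 1 < n) {q : ℕ} (hq : q.Prime) (hqn : q ∣ n)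
    {I : Ideal (ZMod n)} (hI : ((n / q : ℕ) : ZMod n) ∈ I) :
    IsEssentialIdeal (I ⊔ span {(q : ZMod n)}) := by
  refine isEssentialIdeal_of_forall_natCast_div_mem hn fun r hr hrn => ?_
  rcases eq_or_ne r q with rfl | hrq
  · exact mem_sup_left hI
  · exact mem_sup_right (natCast_div_mem_span_natCast
      (((Nat.coprime_primes hr hq).2 hrq).mul_dvd_of_dvd_of_dvd hrn hqn))

lemma not_isEssentialIdeal_span_natCast {a b : ℕ} (hab : a * b = n) (hcop : a.Coprime b)
    (ha : a ≠ 1) : ¬ IsEssentialIdeal (span {(a : ZMod n)}) := by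
  intro h
  refine h.2 (span {(b : ZMod n)}) ?_ ?_
  · have hb : b ≠ 0 := by
      rintro rfl
      exact ha (Nat.coprime_zero_right _ |>.1 hcop)
    rw [Ne, span_singleton_eq_bot, natCast_eq_zero_iff, ← hab]
    intro hdvd
    exact ha (Nat.dvd_one.1 ((Nat.mul_dvd_mul_iff_right (Nat.pos_of_ne_zero hb)).1
      (by simpa using hdvd)))
  · rw [← mul_eq_inf_of_coprime (span_natCast_sup_span_natCast_eq_top hcop),
      span_singleton_mul_span_singleton, ← Nat.cast_mul, hab, natCast_self, span_singleton_zero]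

lemma exists_reachable_span_prime (hn : 1 < n) (x : {I : Ideal (ZMod n) // I ≠ ⊥ ∧ I ≠ ⊤}) :
    ∃ p, p.Prime ∧ p ∣ n ∧ ∃ hp : span {(p : ZMod n)} ≠ ⊥ ∧ span {(p : ZMod n)} ≠ ⊤,
      (essentialIdealGraph (ZMod n)).Reachable x ⟨_, hp⟩ := by
  have : NeZero n := ⟨by omega⟩
  obtain ⟨p, hp, hpn, hx⟩ := exists_prime_natCast_div_mem x.2.1
  have hpn' : p ≠ n := fun h => x.2.2 <| (eq_top_iff_one _).2 <| by
    simpa [h, Nat.div_self (by omega : 0 < n)] using hx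
  exact ⟨p, hp, hpn, ⟨span_natCast_ne_bot hpn hpn', span_natCast_ne_top hpn hp.ne_one⟩,
    essentialIdealGraph_reachable_of_isEssentialIdeal_sup
      (isEssentialIdeal_sup_span_prime hn hp hpn hx)⟩

lemma essentialIdealGraph_preconnected (hn : 1 < n) :
    (essentialIdealGraph (ZMod n)).Preconnected := by
  intro x y
  obtain ⟨p, hp, hpn, hP, hxP⟩ := exists_reachable_span_prime hn x
  obtain ⟨q, hq, hqn, hQ, hyQ⟩ := exists_reachable_span_prime hn y
  refine hxP.trans (SimpleGraph.Reachable.trans ?_ hyQ.symm)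
  rcases eq_or_ne p q with rfl | hpq
  · exact SimpleGraph.Reachable.refl _
  · exact essentialIdealGraph_reachable_of_isEssentialIdeal_sup
      (isEssentialIdeal_sup_span_prime hn hq hqn (natCast_div_mem_span_natCast
        (((Nat.coprime_primes hq hp).2 hpq.symm).mul_dvd_of_dvd_of_dvd hqn hpn)))

lemma exists_adj_not_adj_essentialIdealGraph {a b : ℕ} (hab : a * b = n) (hcop : a.Coprime b)
    (ha : 1 < a) (hb : 1 < b) (hbp : ¬ b.Prime) :
    ∃ u v w : {I : Ideal (ZMod n) // I ≠ ⊥ ∧ I ≠ ⊤}, u ≠ v ∧ w ≠ v ∧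
      (essentialIdealGraph (ZMod n)).Adj w u ∧ ¬ (essentialIdealGraph (ZMod n)).Adj w v := by
  have hn : 1 < n := by rw [← hab]; nlinarith
  have : NeZero n := ⟨by omega⟩
  have : Nontrivial (ZMod n) := nontrivial_iff.2 hn.ne'
  set ρ := b.minFac
  have hρ : ρ.Prime := Nat.minFac_prime hb.ne'
  have hρb : ρ < b := (Nat.not_prime_iff_minFac_lt hb).1 hbp
  have hρn : ρ ∣ n := b.minFac_dvd.trans (Dvd.intro_left a hab)
  have haρn : a * ρ ∣ n := hab ▸ mul_dvd_mul_left a b.minFac_dvd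
  have han : a ∣ n := Dvd.intro b hab
  have hab' : a * ρ < a * b := Nat.mul_lt_mul_of_pos_left hρb (by omega)
  have hρab : ρ < a * b := lt_of_lt_of_le hρb (Nat.le_mul_of_pos_left b (by omega))
  have hU : span {(ρ : ZMod n)} ≠ ⊥ ∧ span {(ρ : ZMod n)} ≠ ⊤ :=
    ⟨span_natCast_ne_bot hρn (by omega), span_natCast_ne_top hρn hρ.ne_one⟩
  have hV : span {((a * ρ : ℕ) : ZMod n)} ≠ ⊥ ∧ span {((a * ρ : ℕ) : ZMod n)} ≠ ⊤ :=
    ⟨span_natCast_ne_bot haρn (by omega), span_natCast_ne_top haρn (by nlinarith [hρ.two_le])⟩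
  have hW : span {(a : ZMod n)} ≠ ⊥ ∧ span {(a : ZMod n)} ≠ ⊤ :=
    ⟨span_natCast_ne_bot han (by nlinarith), span_natCast_ne_top han (by omega)⟩
  have hWU : span {(a : ZMod n)} ⊔ span {(ρ : ZMod n)} = ⊤ :=
    span_natCast_sup_span_natCast_eq_top (hcop.coprime_dvd_right b.minFac_dvd)
  have hVW : span {((a * ρ : ℕ) : ZMod n)} ≤ span {(a : ZMod n)} :=
    span_singleton_le_span_singleton.2 (Nat.cast_dvd_cast (dvd_mul_right a ρ))
  have hVU : span {((a * ρ : ℕ) : ZMod n)} ≤ span {(ρ : ZMod n)} :=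
    span_singleton_le_span_singleton.2 (Nat.cast_dvd_cast (dvd_mul_left ρ a))
  refine ⟨⟨_, hU⟩, ⟨_, hV⟩, ⟨_, hW⟩, fun h => hW.2 ?_, fun h => hU.2 ?_, ⟨fun h => hU.2 ?_, ?_⟩,
    fun h => not_isEssentialIdeal_span_natCast hab hcop ha.ne' ?_⟩
  · rwa [← sup_eq_left.2 hVW, ← Subtype.mk.inj h]
  · rwa [← sup_eq_right.2 hVU, ← Subtype.mk.inj h]
  · rwa [Subtype.mk.inj h, sup_idem] at hWU
  · simp only [hWU]
    exact isEssentialIdeal_top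
  · simpa only [sup_eq_left.2 hVW] using h.2

lemma essentialIdealGraph_primePow_eq_top {p m : ℕ} (hp : p.Prime) (hm : m ≠ 0) :
    essentialIdealGraph (ZMod (p ^ m)) = ⊤ := by
  have eq_p : ∀ {r}, r.Prime → r ∣ p ^ m → r = p :=
    fun hr hrn => (Nat.prime_dvd_prime_iff_eq hr hp).1 (hr.dvd_of_dvd_pow hrn)
  refine eq_top_iff.2 fun I J hIJ => ⟨hIJ, isEssentialIdeal_of_forall_natCast_div_mem
    (Nat.one_lt_pow hm hp.one_lt) fun r hr hrn => ?_⟩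
  obtain ⟨s, hs, hsn, hsI⟩ := exists_prime_natCast_div_mem I.2.1
  obtain rfl := eq_p hr hrn
  obtain rfl := eq_p hs hsn
  exact mem_sup_left hsI

lemma eq_span_or_eq_span_of_ne_bot_of_ne_top {p q : ℕ} (hp : p.Prime) (hq : q.Prime)
    {I : Ideal (ZMod (p * q))} (h0 : I ≠ ⊥) (h1 : I ≠ ⊤) :
    I = span {(p : ZMod (p * q))} ∨ I = span {(q : ZMod (p * q))} := by
  obtain ⟨d, hd, rfl⟩ := exists_dvd_eq_span I
  obtain ⟨a, b, ha, hb, rfl⟩ := Nat.dvd_mul.1 hd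
  rcases (Nat.dvd_prime hp).1 ha with rfl | rfl <;> rcases (Nat.dvd_prime hq).1 hb with rfl | rfl
  · simp at h1
  · simp
  · simp
  · simp at h0

lemma essentialIdealGraph_prime_mul_prime_eq_top {p q : ℕ} (hp : p.Prime) (hq : q.Prime) :
    essentialIdealGraph (ZMod (p * q)) = ⊤ := by
  have hsup : IsEssentialIdeal (span {(p : ZMod (p * q))} ⊔ span {(q : ZMod (p * q))}) :=
    isEssentialIdeal_sup_span_prime (Nat.one_lt_mul_iff.2 ⟨hp.pos, hq.pos, Or.inl hp.one_lt⟩) hq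
      (dvd_mul_left q p) (by rw [Nat.mul_div_cancel _ hq.pos]; exact subset_span rfl)
  refine eq_top_iff.2 fun I J hIJ => ⟨hIJ, ?_⟩
  have hIJ' : I.1 ≠ J.1 := fun h => hIJ (Subtype.ext h)
  rcases eq_span_or_eq_span_of_ne_bot_of_ne_top hp hq I.2.1 I.2.2 with hI | hI <;>
    rcases eq_span_or_eq_span_of_ne_bot_of_ne_top hp hq J.2.1 J.2.2 with hJ | hJ <;>
    rw [hI, hJ] at hIJ' ⊢
  · exact absurd rfl hIJ'
  · exact hsup
  · rwa [sup_comm]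
  · exact absurd rfl hIJ'

end ZMod

/-- For composite `n ≥ 4` and `T` the number of nonzero proper ideals of
`ℤ/nℤ`, the metric dimension of the essential ideal graph equals `T - 1` iff `n` is a
prime power `p^m` with `m > 1` or a product of two distinct primes. -/
theorem stmt_9 (n : ℕ) (h4 : 4 ≤ n) (hcomp : ¬ n.Prime)
    (T : ℕ) (hT : T = Nat.card {I : Ideal (ZMod n) // I ≠ ⊥ ∧ I ≠ ⊤}) :
    metricDim (essentialIdealGraph (ZMod n)) = T - 1 ↔
      ((∃ p m : ℕ, p.Prime ∧ 1 < m ∧ n = p ^ m) ∨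
        (∃ p₁ p₂ : ℕ, p₁.Prime ∧ p₂.Prime ∧ p₁ ≠ p₂ ∧ n = p₁ * p₂)) := by
  have : NeZero n := ⟨by omega⟩
  subst hT
  constructor
  · intro hdim
    by_contra hrhs
    obtain ⟨hpow, hpq⟩ := not_or.1 hrhs
    have hnpow : ¬ IsPrimePow n := by
      rw [isPrimePow_nat_iff]
      rintro ⟨p, k, hp, hk, rfl⟩
      rcases (show k = 1 ∨ 1 < k by omega) with rfl | hk
      · exact hcomp (by simpa using hp)
      · exact hpow ⟨p, k, hp, hk, rfl⟩
    obtain ⟨a, b, hab, hcop, ha, hb, hbp⟩ :=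
      Nat.exists_coprime_mul_eq_not_prime (by omega) hnpow hpq
    obtain ⟨u, v, w, huv, hwv, hwu, hnwv⟩ :=
      ZMod.exists_adj_not_adj_essentialIdealGraph hab hcop ha hb hbp
    have hle := metricDim_le_card_sub_two (ZMod.essentialIdealGraph_preconnected (by omega))
      huv hwv hwu hnwv
    have hcard : 1 < Nat.card {I : Ideal (ZMod n) // I ≠ ⊥ ∧ I ≠ ⊤} :=
      Finite.one_lt_card_iff_nontrivial.2 ⟨u, v, huv⟩
    omega
  · rintro (⟨p, m, hp, hm, rfl⟩ | ⟨p, q, hp, hq, -, rfl⟩)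
    · rw [ZMod.essentialIdealGraph_primePow_eq_top hp (by omega), metricDim_top]
    · rw [ZMod.essentialIdealGraph_prime_mul_prime_eq_top hp hq, metricDim_top]
end

section
/- Let n = p_1^{m_1} p_2^{m_2} ⋯ p_k^{m_k} with p_1 < p_2 < ⋯ < p_k primes, k ≥ 2, and m_i > 1 for exactly one index i, and let T = ∏_{i=1}^{k}(m_i + 1) − 2 be the number of nonzero proper ideals of Z_n = Z/nZ. Then the metric dimension of the essential ideal graph E_{Z_n} equals T − (2^k − 2). -/
/-!
Write `n = ∏ pᵢ ^ mᵢ`. The ideals of `ℤ/nℤ` form a lattice isomorphic to the product of chains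
`∏ [0, mᵢ]`, the vector `x` corresponding to the ideal generated by `∏ pᵢ ^ (mᵢ - xᵢ)`. An element
of such a product is essential (meets every nonzero element) iff none of its coordinates is `0`.
So two vertices of the essential ideal graph are adjacent iff their types, the sets of coordinates
at which they vanish, are disjoint; all distances are `1` or `2` and depend only on the types.

The types are exactly the proper subsets of the index set. If `i₀` is the index with `mᵢ₀ > 1`,
a type containing `i₀` is carried by a single vertex, while each `{j}` with `j ≠ i₀` is carried
by at least two. A resolving set must contain all but one vertex of each type, and cannot omit
vertices of both types `∅` and `{i₀}`: these are at distance `1` from every vertex whose type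
avoids `i₀`. Omitting one vertex of every type other than `{i₀}` does resolve, because every
singleton type is still present in the set.
-/

open Finset

namespace ZMod

variable {n : ℕ} [NeZero n]

theorem mem_span_natCast_iff {d : ℕ} (hd : d ∣ n) {x : ZMod n} :
    x ∈ Ideal.span {(d : ZMod n)} ↔ d ∣ x.val := by
  rw [Ideal.mem_span_singleton]
  constructor
  · rintro ⟨c, rfl⟩
    rw [val_mul, Nat.dvd_mod_iff hd, val_natCast]
    exact ((Nat.dvd_mod_iff hd).2 dvd_rfl).mul_right _
  · rintro ⟨c, hc⟩
    exact ⟨c, by rw [← natCast_zmod_val x, hc, Nat.cast_mul]⟩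

theorem span_natCast_le_span_natCast_iff {d e : ℕ} (hd : d ∣ n) :
    Ideal.span {(e : ZMod n)} ≤ Ideal.span {(d : ZMod n)} ↔ d ∣ e := by
  rw [Ideal.span_singleton_le_iff_mem, mem_span_natCast_iff hd, val_natCast, Nat.dvd_mod_iff hd]

theorem exists_dvd_and_eq_span (I : Ideal (ZMod n)) :
    ∃ d, d ∣ n ∧ I = Ideal.span {(d : ZMod n)} := by
  obtain ⟨g, rfl⟩ :=
    (IsPrincipalIdealRing.of_surjective (Int.castRingHom (ZMod n)) intCast_surjective).principal I
  have hdvd : g.val.gcd n ∣ n := Nat.gcd_dvd_right _ _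
  refine ⟨g.val.gcd n, hdvd, le_antisymm ?_ ?_⟩
  · rw [Ideal.submodule_span_eq, Ideal.span_singleton_le_iff_mem, mem_span_natCast_iff hdvd]
    exact Nat.gcd_dvd_left _ _
  · rw [Ideal.submodule_span_eq, Ideal.span_singleton_le_iff_mem, Ideal.mem_span_singleton]
    refine ⟨(Nat.gcdA g.val n : ZMod n), ?_⟩
    have bezout := congrArg (Int.cast : ℤ → ZMod n) (Nat.gcd_eq_gcd_ab g.val n)
    push_cast at bezout
    simpa [natCast_zmod_val] using bezout

end ZMod

namespace Nat

variable {ι : Type*} [Fintype ι] {p : ι → ℕ} (hp : ∀ i, (p i).Prime)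
include hp

theorem prod_pow_ne_zero (a : ι → ℕ) : ∏ i, p i ^ a i ≠ 0 :=
  prod_ne_zero_iff.2 fun i _ => pow_ne_zero _ (hp i).ne_zero

theorem factorization_prod_pow_eq_sum_single (a : ι → ℕ) :
    (∏ i, p i ^ a i).factorization = ∑ i, Finsupp.single (p i) (a i) := by
  rw [factorization_prod fun i _ => pow_ne_zero _ (hp i).ne_zero]
  exact sum_congr rfl fun i _ => (hp i).factorization_pow

theorem factorization_prod_pow_of_notMem_range (a : ι → ℕ) {q : ℕ} (hq : q ∉ Set.range p) :
    (∏ i, p i ^ a i).factorization q = 0 := by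
  rw [factorization_prod_pow_eq_sum_single hp, Finsupp.finsetSum_apply]
  exact sum_eq_zero fun i _ => Finsupp.single_eq_of_ne fun h => hq ⟨i, h.symm⟩

variable (hinj : Function.Injective p)
include hinj

theorem factorization_prod_pow_apply (a : ι → ℕ) (j : ι) :
    (∏ i, p i ^ a i).factorization (p j) = a j := by
  classical
  simp [factorization_prod_pow_eq_sum_single hp, Finsupp.single_apply, hinj.eq_iff]

theorem prod_pow_dvd_prod_pow_iff {a b : ι → ℕ} :
    ∏ i, p i ^ a i ∣ ∏ i, p i ^ b i ↔ a ≤ b := by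
  refine ⟨fun h j => ?_, fun h => prod_dvd_prod_of_dvd _ _ fun i _ => pow_dvd_pow _ (h i)⟩
  have := (factorization_le_iff_dvd (prod_pow_ne_zero hp a) (prod_pow_ne_zero hp b)).2 h (p j)
  rwa [factorization_prod_pow_apply hp hinj, factorization_prod_pow_apply hp hinj] at this

theorem exists_eq_prod_pow_of_dvd {b : ι → ℕ} {d : ℕ} (hd : d ∣ ∏ i, p i ^ b i) :
    ∃ a ≤ b, d = ∏ i, p i ^ a i := by
  have hd0 : d ≠ 0 := ne_zero_of_dvd_ne_zero (prod_pow_ne_zero hp b) hd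
  have hle := (factorization_le_iff_dvd hd0 (prod_pow_ne_zero hp b)).2 hd
  refine ⟨fun i => d.factorization (p i), fun i => ?_,
    eq_of_factorization_eq hd0 (prod_pow_ne_zero hp _) fun q => ?_⟩
  · simpa [factorization_prod_pow_apply hp hinj] using hle (p i)
  · by_cases hq : q ∈ Set.range p
    · obtain ⟨j, rfl⟩ := hq
      rw [factorization_prod_pow_apply hp hinj]
    · simpa [factorization_prod_pow_of_notMem_range hp _ hq] using hle q

end Nat

theorem nonempty_orderIso_ideal_zmod_prod_pow {ι : Type*} [Fintype ι] {p : ι → ℕ}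
    (hp : ∀ i, (p i).Prime) (hinj : Function.Injective p) (m : ι → ℕ) :
    Nonempty ((∀ i, Fin (m i + 1)) ≃o Ideal (ZMod (∏ i, p i ^ m i))) := by
  set n := ∏ i, p i ^ m i
  have : NeZero n := ⟨Nat.prod_pow_ne_zero hp m⟩
  let f : (∀ i, Fin (m i + 1)) → Ideal (ZMod n) :=
    fun x => Ideal.span {((∏ i, p i ^ ((x i).rev : ℕ) : ℕ) : ZMod n)}
  have hdvd : ∀ x : ∀ i, Fin (m i + 1), ∏ i, p i ^ ((x i).rev : ℕ) ∣ n :=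
    fun x => (Nat.prod_pow_dvd_prod_pow_iff hp hinj).2 fun i => Nat.le_of_lt_succ (x i).rev.isLt
  have hf : ∀ x y, f x ≤ f y ↔ x ≤ y := by
    intro x y
    rw [ZMod.span_natCast_le_span_natCast_iff (hdvd y), Nat.prod_pow_dvd_prod_pow_iff hp hinj]
    simp only [Pi.le_def, ← Fin.le_def, Fin.rev_le_rev]
  refine ⟨OrderIso.ofSurjective (OrderEmbedding.ofMapLEIff f hf) fun I => ?_⟩
  obtain ⟨d, hd, rfl⟩ := ZMod.exists_dvd_and_eq_span I
  obtain ⟨a, ha, rfl⟩ := Nat.exists_eq_prod_pow_of_dvd hp hinj hd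
  exact ⟨fun i => Fin.rev ⟨a i, Nat.lt_succ_of_le (ha i)⟩,
    by simp only [OrderEmbedding.coe_ofMapLEIff, f, Fin.rev_rev]⟩

theorem metricDim_eq_card_sub {V : Type*} [Finite V] {G : SimpleGraph V} {c : ℕ}
    (hex : ∃ W, IsResolvingSet G W ∧ Wᶜ.ncard = c)
    (hle : ∀ W, IsResolvingSet G W → Wᶜ.ncard ≤ c) :
    metricDim G = Nat.card V - c := by
  obtain ⟨W, hW, hWc⟩ := hex
  refine le_antisymm (Nat.sInf_le ⟨W, W.toFinite, hW, ?_⟩)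
    (le_csInf ⟨_, W, W.toFinite, hW, rfl⟩ ?_)
  · have := W.ncard_add_ncard_compl
    omega
  · rintro _ ⟨W', -, hW', rfl⟩
    have := hle W' hW'
    have := W'.ncard_add_ncard_compl
    omega

theorem card_erase_erase_univ {ι : Type*} [Fintype ι] [DecidableEq ι] {S : Finset ι}
    (hS : S ≠ univ) :
    ((univ.erase univ).erase S : Finset (Finset ι)).card = 2 ^ Fintype.card ι - 2 := by
  rw [card_erase_of_mem (by simp [hS]), card_erase_of_mem (mem_univ _), card_univ,
    Fintype.card_finset, Nat.sub_sub]

section DisjointnessGraph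

variable {V ι : Type*} [DecidableEq ι] {G : SimpleGraph V} {t : V → Finset ι}
  (hadj : ∀ u v, G.Adj u v ↔ u ≠ v ∧ Disjoint (t u) (t v))
include hadj

theorem dist_eq_ite_disjoint (hempty : ∃ z, t z = ∅) {u v : V} (huv : u ≠ v) :
    G.dist u v = if Disjoint (t u) (t v) then 1 else 2 := by
  split_ifs with hd
  · exact SimpleGraph.dist_eq_one_iff_adj.2 ((hadj u v).2 ⟨huv, hd⟩)
  obtain ⟨z, hz⟩ := hempty
  have hzu : G.Adj u z := (hadj u z).2 ⟨by rintro rfl; simp [hz] at hd, by simp [hz]⟩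
  have hzv : G.Adj v z := (hadj v z).2 ⟨by rintro rfl; simp [hz] at hd, by simp [hz]⟩
  have hnadj : ¬ G.Adj u v := fun h => hd ((hadj u v).1 h).2
  unfold SimpleGraph.dist
  rw [SimpleGraph.edist_eq_two_iff.2 ⟨huv, hnadj, z, G.mem_commonNeighbors.2 ⟨hzu, hzv⟩⟩]
  rfl

theorem IsResolvingSet.injOn_compl (hempty : ∃ z, t z = ∅) {W : Set V}
    (hW : IsResolvingSet G W) : Set.InjOn t Wᶜ := by
  intro u hu v hv htuv
  by_contra huv
  obtain ⟨w, hw, hne⟩ := hW u v huv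
  rw [dist_eq_ite_disjoint hadj hempty (ne_of_mem_of_not_mem hw hu).symm,
    dist_eq_ite_disjoint hadj hempty (ne_of_mem_of_not_mem hw hv).symm, htuv] at hne
  exact hne rfl

theorem isResolvingSet_compl_of_injOn (hempty : ∃ z, t z = ∅) {R : Set V}
    (hRinj : Set.InjOn t R) (hwit : ∀ j, ∃ w ∉ R, t w = {j}) : IsResolvingSet G Rᶜ := by
  have hdist_ne_zero : ∀ {u v}, u ≠ v → G.dist u v ≠ 0 := fun huv => by
    rw [dist_eq_ite_disjoint hadj hempty huv]; split_ifs <;> decide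
  have hsep : ∀ u ∈ R, ∀ v ∈ R, ∀ j ∈ t u, j ∉ t v → ∃ w ∈ Rᶜ, G.dist u w ≠ G.dist v w := by
    intro u hu v hv j hju hjv
    obtain ⟨w, hw, hwt⟩ := hwit j
    refine ⟨w, hw, ?_⟩
    rw [dist_eq_ite_disjoint hadj hempty (ne_of_mem_of_not_mem hu hw),
      dist_eq_ite_disjoint hadj hempty (ne_of_mem_of_not_mem hv hw), hwt,
      if_neg (by simpa using hju), if_pos (by simpa using hjv)]
    decide
  intro u v huv
  by_cases hu : u ∈ R
  · by_cases hv : v ∈ R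
    · obtain ⟨j, hj⟩ : ∃ j, ¬ (j ∈ t u ↔ j ∈ t v) := by
        by_contra! h
        exact huv (hRinj hu hv (Finset.ext h))
      by_cases hju : j ∈ t u
      · exact hsep u hu v hv j hju (by tauto)
      · obtain ⟨w, hw, hne⟩ := hsep v hv u hu j (by tauto) hju
        exact ⟨w, hw, hne.symm⟩
    · exact ⟨v, hv, by rw [SimpleGraph.dist_self]; exact hdist_ne_zero huv⟩
  · exact ⟨u, hu, by rw [SimpleGraph.dist_self]; exact (hdist_ne_zero huv.symm).symm⟩

variable [Fintype ι] [Nontrivial ι] {i₀ : ι} (hsurj : ∀ S, S ≠ univ → ∃ v, t v = S)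
include hsurj

theorem ncard_compl_le_of_isResolvingSet (hne_univ : ∀ v, t v ≠ univ)
    (hinj : ∀ u v, i₀ ∈ t u → t u = t v → u = v) {W : Set V} (hW : IsResolvingSet G W) :
    Wᶜ.ncard ≤ 2 ^ Fintype.card ι - 2 := by
  have hempty := hsurj ∅ univ_nonempty.ne_empty.symm
  obtain ⟨S₀, hS₀, hS₀W⟩ : ∃ S₀, S₀ ≠ univ ∧ ∀ v ∉ W, t v ≠ S₀ := by
    by_contra! hall
    obtain ⟨u, hu, hut⟩ := hall ∅ univ_nonempty.ne_empty.symm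
    obtain ⟨v, hv, hvt⟩ := hall {i₀} (singleton_ne_univ i₀)
    have hi₀ : ∀ w ∈ W, i₀ ∉ t w := fun w hw hi₀ => by
      obtain ⟨x, hx, hxt⟩ := hall (t w) (hne_univ w)
      exact hx (hinj w x hi₀ hxt.symm ▸ hw)
    obtain ⟨w, hw, hne⟩ := hW u v (by rintro rfl; simp [hvt] at hut)
    rw [dist_eq_ite_disjoint hadj hempty (ne_of_mem_of_not_mem hw hu).symm,
      dist_eq_ite_disjoint hadj hempty (ne_of_mem_of_not_mem hw hv).symm, hut, hvt,
      if_pos (disjoint_empty_left _), if_pos (disjoint_singleton_left.2 (hi₀ w hw))] at hne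
    exact hne rfl
  calc Wᶜ.ncard = (t '' Wᶜ).ncard := ((hW.injOn_compl hadj hempty).ncard_image).symm
    _ ≤ (((univ.erase univ).erase S₀ : Finset (Finset ι)) : Set (Finset ι)).ncard :=
      Set.ncard_le_ncard (by rintro _ ⟨v, hv, rfl⟩; simp [hne_univ v, hS₀W v hv])
    _ = 2 ^ Fintype.card ι - 2 := by rw [Set.ncard_coe_finset, card_erase_erase_univ hS₀]

theorem exists_isResolvingSet_ncard_compl
    (htwins : ∀ j, j ≠ i₀ → ∃ u v, u ≠ v ∧ t u = {j} ∧ t v = {j}) :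
    ∃ W, IsResolvingSet G W ∧ Wᶜ.ncard = 2 ^ Fintype.card ι - 2 := by
  set F : Finset (Finset ι) := (univ.erase univ).erase {i₀}
  obtain ⟨R, hRF, hRinj⟩ := Set.exists_image_eq_injOn_of_subset_range (f := t) (t := (F : Set _))
    fun S hS => hsurj S (by simp [F] at hS; tauto)
  have hwit : ∀ j, ∃ w ∉ R, t w = {j} := by
    intro j
    by_cases hj : j = i₀
    · obtain ⟨w, hw⟩ := hsurj {j} (singleton_ne_univ j)
      refine ⟨w, fun hwR => ?_, hw⟩
      have : t w ∈ t '' R := ⟨w, hwR, rfl⟩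
      simp [hRF, hw, F, hj] at this
    · obtain ⟨u, v, huv, hu, hv⟩ := htwins j hj
      by_cases huR : u ∈ R
      · exact ⟨v, fun hvR => huv (hRinj huR hvR (hu.trans hv.symm)), hv⟩
      · exact ⟨u, huR, hu⟩
  refine ⟨Rᶜ,
    isResolvingSet_compl_of_injOn hadj (hsurj ∅ univ_nonempty.ne_empty.symm) hRinj hwit, ?_⟩
  rw [compl_compl, ← hRinj.ncard_image, hRF, Set.ncard_coe_finset,
    card_erase_erase_univ (singleton_ne_univ i₀)]

theorem metricDim_eq_of_adj_iff_disjoint [Finite V] (hne_univ : ∀ v, t v ≠ univ)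
    (hinj : ∀ u v, i₀ ∈ t u → t u = t v → u = v)
    (htwins : ∀ j, j ≠ i₀ → ∃ u v, u ≠ v ∧ t u = {j} ∧ t v = {j}) :
    metricDim G = Nat.card V - (2 ^ Fintype.card ι - 2) :=
  metricDim_eq_card_sub (exists_isResolvingSet_ncard_compl hadj hsurj htwins)
    fun _ hW => ncard_compl_le_of_isResolvingSet hadj hsurj hne_univ hinj hW

end DisjointnessGraph

theorem OrderIso.isEssentialIdeal_apply_iff {L R : Type*} [Lattice L] [OrderBot L] [CommRing R]
    (φ : L ≃o Ideal R) (x : L) :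
    IsEssentialIdeal (φ x) ↔ x ≠ ⊥ ∧ ∀ y, y ≠ ⊥ → x ⊓ y ≠ ⊥ := by
  simp only [IsEssentialIdeal, φ.surjective.forall, ← φ.map_inf, ne_eq, map_eq_bot_iff]

theorem Nat.card_subtype_ne_bot_and_ne_top {L : Type*} [PartialOrder L] [BoundedOrder L]
    [Nontrivial L] [Finite L] : Nat.card {x : L // x ≠ ⊥ ∧ x ≠ ⊤} = Nat.card L - 2 := by
  classical
  have := Fintype.ofFinite L
  rw [Nat.card_eq_fintype_card, Nat.card_eq_fintype_card, Fintype.card_subtype]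
  have : ({x | x ≠ ⊥ ∧ x ≠ ⊤} : Finset L) = (univ.erase ⊥).erase ⊤ := by
    ext; simp [and_comm]
  rw [this, card_erase_of_mem (by simp), card_erase_of_mem (mem_univ _), Finset.card_univ,
    Nat.sub_sub]

section ProductOfChains

variable {ι : Type*} {α : ι → Type*} [∀ i, LinearOrder (α i)] [∀ i, BoundedOrder (α i)]

theorem Pi.inf_ne_bot_iff_forall_ne_bot [DecidableEq ι] [Nonempty ι] [∀ i, Nontrivial (α i)]
    {x : ∀ i, α i} : (x ≠ ⊥ ∧ ∀ y, y ≠ ⊥ → x ⊓ y ≠ ⊥) ↔ ∀ i, x i ≠ ⊥ := by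
  constructor
  · rintro ⟨-, hx⟩ i hi
    refine hx (Function.update ⊥ i ⊤)
      (fun h => top_ne_bot (α := α i) (by simpa using congrFun h i)) (funext fun j => ?_)
    by_cases hj : j = i
    · subst hj; simp [hi]
    · simp [hj]
  · intro hx
    refine ⟨fun h => hx (Classical.arbitrary ι) (congrFun h _), fun y hy hxy => ?_⟩
    obtain ⟨j, hj⟩ := Function.ne_iff.1 hy
    exact (min_eq_bot.1 (congrFun hxy j)).elim (hx j) hj

variable [Fintype ι]

def botCoords (x : ∀ i, α i) : Finset ι := {i | x i = ⊥}

theorem mem_botCoords {x : ∀ i, α i} {i : ι} : i ∈ botCoords x ↔ x i = ⊥ := by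
  simp [botCoords]

theorem botCoords_eq_univ_iff {x : ∀ i, α i} : botCoords x = univ ↔ x = ⊥ := by
  simp [eq_univ_iff_forall, mem_botCoords, funext_iff]

theorem ne_bot_and_ne_top_of_botCoords_eq_singleton [Nontrivial ι] [∀ i, Nontrivial (α i)]
    {x : ∀ i, α i} {j : ι} (hx : botCoords x = {j}) : x ≠ ⊥ ∧ x ≠ ⊤ := by
  refine ⟨fun h => singleton_ne_univ j (hx ▸ botCoords_eq_univ_iff.2 h), fun h => ?_⟩
  exact top_ne_bot (α := α j) ((congrFun h j).symm.trans (mem_botCoords.1 (by simp [hx])))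

variable [DecidableEq ι] {i₀ : ι}

theorem eq_of_botCoords_eq (htwo : ∀ i, i ≠ i₀ → ∀ a : α i, a = ⊥ ∨ a = ⊤) {x y : ∀ i, α i}
    (hx : i₀ ∈ botCoords x) (hxy : botCoords x = botCoords y) : x = y := by
  have hy : i₀ ∈ botCoords y := hxy ▸ hx
  funext i
  by_cases hi : i = i₀
  · subst hi
    rw [mem_botCoords.1 hx, mem_botCoords.1 hy]
  · have h := congrArg (i ∈ ·) hxy
    simp only [mem_botCoords, eq_iff_iff] at h
    rcases htwo i hi (x i) with h1 | h1 <;> rcases htwo i hi (y i) with h2 | h2 <;> simp_all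

variable [∀ i, Nontrivial (α i)] {c : α i₀} (hc_bot : c ≠ ⊥) (hc_top : c ≠ ⊤)
include hc_bot hc_top

theorem exists_botCoords_eq {S : Finset ι} (hS : S ≠ univ) :
    ∃ x : ∀ i, α i, x ≠ ⊥ ∧ x ≠ ⊤ ∧ botCoords x = S := by
  set x : ∀ i, α i := S.piecewise ⊥ (Function.update ⊤ i₀ c)
  have hx : botCoords x = S := by
    ext i
    by_cases hi : i ∈ S
    · simp [mem_botCoords, x, hi]
    · by_cases hi₀ : i = i₀
      · subst hi₀; simp [mem_botCoords, x, hi, hc_bot]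
      · simp [mem_botCoords, x, hi, hi₀]
  refine ⟨x, fun h => hS (hx ▸ botCoords_eq_univ_iff.2 h), fun h => ?_, hx⟩
  have := congrFun h i₀
  by_cases hi₀ : i₀ ∈ S
  · simp [x, hi₀] at this
  · simp [x, hi₀, hc_top] at this

theorem exists_ne_botCoords_eq_singleton {j : ι} (hj : j ≠ i₀) :
    ∃ x y : ∀ i, α i, x ≠ y ∧ botCoords x = {j} ∧ botCoords y = {j} := by
  refine ⟨Function.update ⊤ j ⊥, Function.update (Function.update ⊤ i₀ c) j ⊥, fun h => ?_,
    ?_, ?_⟩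
  · exact hc_top (by simpa [hj.symm] using (congrFun h i₀).symm)
  all_goals ext i; by_cases hi : i = j <;> by_cases hi₀ : i = i₀ <;> simp_all [mem_botCoords]

end ProductOfChains

section EssentialIdealGraph

variable {ι : Type*} [Fintype ι] [DecidableEq ι] {α : ι → Type*} [∀ i, LinearOrder (α i)]
  [∀ i, BoundedOrder (α i)] [∀ i, Nontrivial (α i)] {R : Type*} [CommRing R]

theorem essentialIdealGraph_adj_iff_s12 [Nonempty ι] (φ : (∀ i, α i) ≃o Ideal R)
    (u v : {I : Ideal R // I ≠ ⊥ ∧ I ≠ ⊤}) :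
    (essentialIdealGraph R).Adj u v ↔
      u ≠ v ∧ Disjoint (botCoords (φ.symm u.1)) (botCoords (φ.symm v.1)) := by
  refine and_congr_right fun _ => ?_
  rw [← φ.apply_symm_apply (u.1 ⊔ v.1), φ.isEssentialIdeal_apply_iff,
    Pi.inf_ne_bot_iff_forall_ne_bot, φ.symm.map_sup]
  simp [disjoint_left, mem_botCoords]

theorem metricDim_essentialIdealGraph_of_orderIso [Nontrivial ι] [∀ i, Finite (α i)]
    (φ : (∀ i, α i) ≃o Ideal R) {i₀ : ι} {c : α i₀} (hc_bot : c ≠ ⊥) (hc_top : c ≠ ⊤)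
    (htwo : ∀ i, i ≠ i₀ → ∀ a : α i, a = ⊥ ∨ a = ⊤) :
    metricDim (essentialIdealGraph R) = Nat.card (∀ i, α i) - 2 - (2 ^ Fintype.card ι - 2) := by
  let V := {I : Ideal R // I ≠ ⊥ ∧ I ≠ ⊤}
  have : Nontrivial (∀ i, α i) := Pi.nontrivial_at i₀
  have : Finite (Ideal R) := Finite.of_equiv _ φ.toEquiv
  have hV : Nat.card V = Nat.card (∀ i, α i) - 2 := by
    rw [← Nat.card_subtype_ne_bot_and_ne_top]
    exact Nat.card_congr (φ.symm.toEquiv.subtypeEquiv fun I => by simp)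
  have hvertex : ∀ x : ∀ i, α i, x ≠ ⊥ → x ≠ ⊤ → ∃ v : V, φ.symm v.1 = x :=
    fun x hx_bot hx_top =>
      ⟨⟨φ x, by simpa using hx_bot, by simpa using hx_top⟩, φ.symm_apply_apply x⟩
  rw [← hV]
  refine metricDim_eq_of_adj_iff_disjoint (t := fun v => botCoords (φ.symm v.1)) (i₀ := i₀)
    (essentialIdealGraph_adj_iff_s12 φ) (fun S hS => ?_) (fun v h => ?_)
    (fun u v hu huv => Subtype.ext (φ.symm.injective (eq_of_botCoords_eq htwo hu huv)))
    (fun j hj => ?_)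
  · obtain ⟨x, hx_bot, hx_top, rfl⟩ := exists_botCoords_eq hc_bot hc_top hS
    obtain ⟨v, rfl⟩ := hvertex x hx_bot hx_top
    exact ⟨v, rfl⟩
  · exact v.2.1 (by simpa using botCoords_eq_univ_iff.1 h)
  · obtain ⟨x, y, hxy, hx, hy⟩ := exists_ne_botCoords_eq_singleton hc_bot hc_top hj
    obtain ⟨u, rfl⟩ := hvertex x (ne_bot_and_ne_top_of_botCoords_eq_singleton hx).1
      (ne_bot_and_ne_top_of_botCoords_eq_singleton hx).2
    obtain ⟨v, rfl⟩ := hvertex y (ne_bot_and_ne_top_of_botCoords_eq_singleton hy).1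
      (ne_bot_and_ne_top_of_botCoords_eq_singleton hy).2
    exact ⟨u, v, fun h => hxy (h ▸ rfl), hx, hy⟩

end EssentialIdealGraph

/-- For `n = p₁^{m₁} ⋯ p_k^{m_k}` with `k ≥ 2` distinct primes and
`mᵢ > 1` for exactly one index, the metric dimension of the essential ideal graph of
`ℤ/nℤ` equals `T - (2^k - 2)`, where `T = ∏ (mᵢ + 1) - 2`. -/
theorem stmt_12 (k : ℕ) (hk : 2 ≤ k) (p : Fin k → ℕ) (m : Fin k → ℕ)
    (hp : ∀ i, (p i).Prime) (hmono : StrictMono p)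
    (hm : ∀ i, 1 ≤ m i) (hone : ∃! i : Fin k, 1 < m i)
    (n : ℕ) (hn : n = ∏ i, p i ^ m i)
    (T : ℕ) (hT : T = (∏ i, (m i + 1)) - 2) :
    metricDim (essentialIdealGraph (ZMod n)) = T - (2 ^ k - 2) := by
  obtain ⟨i₀, hi₀, hi₀_unique⟩ := hone
  have hm_one : ∀ i, i ≠ i₀ → m i = 1 := fun i hi => by
    have := hm i
    by_contra h
    exact hi (hi₀_unique i (by omega))
  have : ∀ i, Nontrivial (Fin (m i + 1)) :=
    fun i => Fin.nontrivial_iff_two_le.2 (by have := hm i; omega)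
  have : Nontrivial (Fin k) := Fin.nontrivial_iff_two_le.2 hk
  have hbinary : ∀ i, i ≠ i₀ → ∀ a : Fin (m i + 1), a = ⊥ ∨ a = ⊤ := fun i hi a => by
    have := hm_one i hi
    have := a.isLt
    rw [Fin.ext_iff, Fin.ext_iff, bot_eq_zero, Fin.top_eq_last, Fin.val_zero, Fin.val_last]
    omega
  let c : Fin (m i₀ + 1) := ⟨1, by omega⟩
  obtain ⟨φ⟩ := nonempty_orderIso_ideal_zmod_prod_pow hp hmono.injective m
  subst hn hT
  rw [metricDim_essentialIdealGraph_of_orderIso φ (c := c) (by simp [c, Fin.ext_iff, bot_eq_zero])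
    (by simp [c, Fin.ext_iff, Fin.top_eq_last]; omega) hbinary, Nat.card_pi, Fintype.card_fin]
  simp [Nat.card_eq_fintype_card]
end

section
/- Let n = p_1 p_2 ⋯ p_k be a product of k ≥ 2 distinct primes. Then the first Zagreb index of the essential ideal graph E_{Z_n} of Z_n = Z/nZ equals Σ_{i=1}^{k−1} C(k, i)·(2^{k−i} − 1)^2, where C(k,i) is the binomial coefficient (k choose i). -/
open Finset

theorem forall_inf_ne_bot_iff_eq_top {β : Type*} [BooleanAlgebra β] {a : β} :
    (∀ b : β, b ≠ ⊥ → a ⊓ b ≠ ⊥) ↔ a = ⊤ := by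
  refine ⟨fun h => ?_, fun ha b hb => by rwa [ha, top_inf_eq]⟩
  by_contra ha
  exact h aᶜ (by simpa using ha) inf_compl_eq_bot

theorem isEssentialIdeal_iff_of_orderIso {R β : Type*} [CommRing R] [BooleanAlgebra β]
    (e : Ideal R ≃o β) {I : Ideal R} : IsEssentialIdeal I ↔ I ≠ ⊥ ∧ I = ⊤ := by
  refine and_congr_right fun _ => ?_
  rw [← map_eq_top_iff e, ← forall_inf_ne_bot_iff_eq_top, e.surjective.forall]
  simp only [ne_eq, ← e.map_inf, map_eq_bot_iff e]

theorem IsSimpleOrder.le_iff_eq_top_imp {α : Type*} [PartialOrder α] [BoundedOrder α]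
    [IsSimpleOrder α] {a b : α} : a ≤ b ↔ (a = ⊤ → b = ⊤) := by
  rcases eq_bot_or_eq_top a with rfl | rfl
  · simp
  · simp [top_le_iff]

open Classical in
noncomputable def IsSimpleOrder.piOrderIsoFinset {ι : Type*} [Fintype ι] {α : ι → Type*}
    [∀ i, PartialOrder (α i)] [∀ i, BoundedOrder (α i)] [∀ i, IsSimpleOrder (α i)] :
    (Π i, α i) ≃o Finset ι where
  toFun a := {i | a i = ⊤}
  invFun S i := if i ∈ S then ⊤ else ⊥
  left_inv a := funext fun i => by rcases eq_bot_or_eq_top (a i) with h | h <;> simp [h]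
  right_inv S := by ext i; by_cases hi : i ∈ S <;> simp [hi]
  map_rel_iff' := by
    simp [Pi.le_def, IsSimpleOrder.le_iff_eq_top_imp, subset_iff]

def comaximalGraph (α : Type*) [Lattice α] [BoundedOrder α] :
    SimpleGraph {a : α // a ≠ ⊥ ∧ a ≠ ⊤} where
  Adj a b := a ≠ b ∧ a.1 ⊔ b.1 = ⊤
  symm := ⟨fun _ _ h => ⟨h.1.symm, by rw [sup_comm, h.2]⟩⟩
  loopless := ⟨fun _ h => h.1 rfl⟩

theorem essentialIdealGraph_eq_comaximalGraph {R β : Type*} [CommRing R] [BooleanAlgebra β]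
    (e : Ideal R ≃o β) : essentialIdealGraph R = comaximalGraph (Ideal R) := by
  ext I J
  simp only [essentialIdealGraph, comaximalGraph, isEssentialIdeal_iff_of_orderIso e]
  exact and_congr_right fun _ => and_iff_right (ne_bot_of_le_ne_bot I.2.1 le_sup_left)

def OrderIso.comaximalGraphIso {α β : Type*} [Lattice α] [BoundedOrder α] [Lattice β]
    [BoundedOrder β] (e : α ≃o β) : comaximalGraph α ≃g comaximalGraph β where
  toEquiv := e.toEquiv.subtypeEquiv fun a => by simp
  map_rel_iff' {a b} := by
    simp only [comaximalGraph, Equiv.subtypeEquiv_apply, OrderIso.coe_toEquiv, ne_eq,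
      Subtype.mk.injEq]
    rw [e.injective.eq_iff, ← e.map_sup, map_eq_top_iff e, Subtype.ext_iff]

theorem SimpleGraph.Iso.gdeg_eq {V W : Type*} {G : SimpleGraph V} {H : SimpleGraph W}
    (e : G ≃g H) (v : V) : gdeg H (e v) = gdeg G v :=
  (Nat.card_congr (e.toEquiv.subtypeEquiv fun _ => e.map_adj_iff.symm)).symm

theorem SimpleGraph.Iso.zagreb1_eq {V W : Type*} {G : SimpleGraph V} {H : SimpleGraph W}
    (e : G ≃g H) : zagreb1 G = zagreb1 H := by
  unfold zagreb1
  rw [← finsum_comp_equiv e.toEquiv]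
  exact finsum_congr fun v => by rw [← e.gdeg_eq v]; rfl

theorem comaximalGraph_adj_iff {β : Type*} [BooleanAlgebra β] {a b : {x : β // x ≠ ⊥ ∧ x ≠ ⊤}} :
    (comaximalGraph β).Adj a b ↔ a.1ᶜ ≤ b.1 := by
  rw [← codisjoint_iff_compl_le_right, codisjoint_iff]
  refine ⟨And.right, fun h => ⟨?_, h⟩⟩
  rintro rfl
  exact a.2.2 (by rwa [sup_idem] at h)

theorem gdeg_comaximalGraph {β : Type*} [BooleanAlgebra β] (a : {x : β // x ≠ ⊥ ∧ x ≠ ⊤}) :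
    gdeg (comaximalGraph β) a = Nat.card (Set.Ico a.1ᶜ ⊤) := by
  have hcompl : a.1ᶜ ≠ ⊥ := by simpa using a.2.2
  refine Nat.card_congr ((Equiv.subtypeEquivRight fun b => comaximalGraph_adj_iff).trans
    ((Equiv.subtypeSubtypeEquivSubtypeInter _ (a.1ᶜ ≤ ·)).trans
      (Equiv.subtypeEquivRight fun x => ?_)))
  rw [Set.mem_Ico, lt_top_iff_ne_top]
  exact ⟨fun h => ⟨h.2, h.1.2⟩, fun h => ⟨⟨ne_bot_of_le_ne_bot hcompl h.1, h.2⟩, h.1⟩⟩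

theorem gdeg_comaximalGraph_finset {ι : Type*} [Fintype ι] [DecidableEq ι]
    (S : {s : Finset ι // s ≠ ⊥ ∧ s ≠ ⊤}) : gdeg (comaximalGraph (Finset ι)) S = 2 ^ #S.1 - 1 := by
  rw [gdeg_comaximalGraph, ← Finset.coe_Ico, Nat.card_coe_set_eq, Set.ncard_coe_finset]
  refine (card_Ico_finset (subset_univ _)).trans ?_
  rw [card_univ, card_compl, Nat.sub_sub_self (card_le_univ _)]

theorem Finset.ne_bot_and_ne_top_iff_card_mem_Ico {ι : Type*} [Fintype ι] (s : Finset ι) :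
    s ≠ ⊥ ∧ s ≠ ⊤ ↔ #s ∈ Ico 1 (Fintype.card ι) := by
  rw [mem_Ico, Nat.one_le_iff_ne_zero, card_lt_iff_ne_univ, card_ne_zero,
    nonempty_iff_ne_empty]
  rfl

theorem zagreb1_comaximalGraph_finset {ι : Type*} [Fintype ι] [DecidableEq ι] :
    zagreb1 (comaximalGraph (Finset ι)) =
      ∑ m ∈ Ico 1 (Fintype.card ι), (Fintype.card ι).choose m * (2 ^ m - 1) ^ 2 := by
  set n := Fintype.card ι
  have hvert := Finset.ne_bot_and_ne_top_iff_card_mem_Ico (ι := ι)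
  unfold zagreb1
  simp_rw [finsum_eq_sum_of_fintype, gdeg_comaximalGraph_finset]
  rw [← sum_subtype {s | #s ∈ Ico 1 n}
      (fun s => by rw [mem_filter, hvert, and_iff_right (mem_univ s)]) (fun s => (2 ^ #s - 1) ^ 2),
    ← sum_fiberwise_of_maps_to (g := card) (t := Ico 1 n) (by simp)]
  refine sum_congr rfl fun m hm => ?_
  have hfiber : ((univ.filter fun s : Finset ι => #s ∈ Ico 1 n).filter fun s => #s = m) =
      powersetCard m univ := by
    ext s
    simp only [mem_filter, mem_univ, true_and, mem_powersetCard, subset_univ]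
    exact and_iff_right_of_imp fun hs => hs ▸ hm
  rw [hfiber, sum_congr rfl fun s hs => by rw [(mem_powersetCard.1 hs).2], sum_const,
    card_powersetCard, card_univ, smul_eq_mul]

theorem sum_choose_mul_pow_sub_one_sq_reflect (k : ℕ) :
    ∑ m ∈ Ico 1 k, k.choose m * (2 ^ m - 1) ^ 2 =
      ∑ i ∈ Ico 1 k, k.choose i * (2 ^ (k - i) - 1) ^ 2 := by
  have hsymm : ∀ i ∈ Ico 1 k, k.choose i * (2 ^ (k - i) - 1) ^ 2 =
      k.choose (k - i) * (2 ^ (k - i) - 1) ^ 2 := fun i hi => by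
    rw [Nat.choose_symm (mem_Ico.1 hi).2.le]
  rw [sum_congr rfl hsymm, sum_Ico_reflect (fun m => k.choose m * (2 ^ m - 1) ^ 2) 1 k.le_succ,
    Nat.add_sub_cancel_left, Nat.add_sub_cancel]

theorem stmt_18_general (k : ℕ) (p : Fin k → ℕ)
    (hp : ∀ i, (p i).Prime) (hinj : Function.Injective p)
    (n : ℕ) (hn : n = ∏ i, p i) :
    zagreb1 (essentialIdealGraph (ZMod n)) =
      ∑ i ∈ Finset.Ico 1 k, Nat.choose k i * (2 ^ (k - i) - 1) ^ 2 := by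
  subst hn
  have := fun i => Fact.mk (hp i)
  have hcop : Pairwise (Function.onFun Nat.Coprime p) := fun i j hij =>
    (Nat.coprime_primes (hp i) (hp j)).2 (hinj.ne hij)
  let e : Ideal (ZMod (∏ i, p i)) ≃o Finset (Fin k) :=
    (ZMod.prodEquivPi p hcop).symm.idealComapOrderIso.trans
      (Ideal.piOrderIso.trans IsSimpleOrder.piOrderIsoFinset)
  rw [essentialIdealGraph_eq_comaximalGraph e, e.comaximalGraphIso.zagreb1_eq,
    zagreb1_comaximalGraph_finset, Fintype.card_fin, sum_choose_mul_pow_sub_one_sq_reflect]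

/-- For `n` a product of `k ≥ 2` distinct primes, the first Zagreb index of
the essential ideal graph of `ℤ/nℤ` equals `∑_{i=1}^{k-1} C(k,i) (2^{k-i} - 1)²`. -/
theorem stmt_18 (k : ℕ) (hk : 2 ≤ k) (p : Fin k → ℕ)
    (hp : ∀ i, (p i).Prime) (hinj : Function.Injective p)
    (n : ℕ) (hn : n = ∏ i, p i) :
    zagreb1 (essentialIdealGraph (ZMod n)) =
      ∑ i ∈ Finset.Ico 1 k, Nat.choose k i * (2 ^ (k - i) - 1) ^ 2 :=
  stmt_18_general k p hp hinj n hn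
end
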